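/- Let A ≥ B ≥ 1 be integers, a and b nonzero real numbers, and y_1,…,y_A, z_1,…,z_B real numbers. In ℝ[X] set P(X) = a·Π_{i=1}^{A}(X − y_i) and D(X) = b·Π_{i=1}^{B}(X − z_i), let C = A − B, and let Q be the quotient in the division P = D·Q + R with deg R < B. Then the constant coefficient of Q equals (a/b)·(−1)^C·Σ_{1 ≤ τ_1 ≤ τ_2 ≤ ⋯ ≤ τ_C ≤ A} Π_{i=1}^{C} (y_{τ_i + i − 1} − z_{τ_i}), with the conventions y_i = 0 for i > A and z_i = 0 for i > B. -/

import Mathlib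

/-!
Write `P_A(y) = ∏_{i ≤ A} (X - y_i)` and let `y'`, `z'` be the shifted sequences `k ↦ y_{k+1}`.
From `(X - y₁) p = (X - z₁) p + (z₁ - y₁) p` one gets
`P_{A+1}(y) /ₘ P_{B+1}(z) = P_A(y') /ₘ P_B(z') + (z₁ - y₁) • (P_A(y') /ₘ P_{B+1}(z))`.
Splitting the weakly increasing sequences according to whether `τ₁ = 1` shows that the sum
satisfies the same recursion; the conventions `y_i = z_i = 0` beyond `A`, `B` kill the sequences
that leave the range after the shift. The base cases are `B = A` (quotient `1`) and `B = 0`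
(quotient `P_A(y)`, where only `τ ≡ 1` contributes). Finally `Q = (a / b) • (P_A(y) /ₘ P_B(z))`.
-/

open Polynomial Finset

namespace Polynomial

variable {R : Type*} [CommRing R]

theorem smul_divByMonic (c : R) (p : R[X]) {q : R[X]} (hq : q.Monic) :
    c • p /ₘ q = c • (p /ₘ q) := by
  nontriviality R
  exact (div_modByMonic_unique (c • (p /ₘ q)) (c • (p %ₘ q)) hq
    ⟨by rw [mul_smul_comm, ← smul_add, modByMonic_add_div],
      (degree_smul_le _ _).trans_lt (degree_modByMonic_lt _ hq)⟩).1

theorem Monic.divByMonic_eq_one {p q : R[X]} (hp : p.Monic) (hq : q.Monic)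
    (h : p.natDegree = q.natDegree) : p /ₘ q = 1 := by
  nontriviality R
  have hdeg : p.degree = q.degree := by
    rw [degree_eq_natDegree hp.ne_zero, degree_eq_natDegree hq.ne_zero, h]
  refine (div_modByMonic_unique 1 (p - q) hq ⟨by ring, ?_⟩).1
  exact hdeg ▸ degree_sub_lt_left hdeg hp.ne_zero (by rw [hp.leadingCoeff, hq.leadingCoeff])

theorem X_sub_C_mul_divByMonic_X_sub_C_mul (y z : R) (p : R[X]) {q : R[X]} (hq : q.Monic) :
    (X - C y) * p /ₘ ((X - C z) * q) = p /ₘ q + (z - y) • (p /ₘ ((X - C z) * q)) := by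
  nontriviality R
  have hzq : ((X - C z) * q).Monic := (monic_X_sub_C z).mul hq
  refine (div_modByMonic_unique _ ((X - C z) * (p %ₘ q) + (z - y) • (p %ₘ ((X - C z) * q)))
    hzq ⟨?_, ?_⟩).1
  · have h1 := modByMonic_add_div p q
    have h2 := modByMonic_add_div p ((X - C z) * q)
    rw [smul_eq_C_mul, smul_eq_C_mul, C_sub]
    linear_combination (X - C z) * h1 + (C z - C y) * h2
  · refine (degree_add_le _ _).trans_lt (max_lt ?_ ?_)
    · rw [hq.degree_mul, mul_comm, (monic_X_sub_C z).degree_mul, add_comm]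
      exact WithBot.add_lt_add_left (by simp) (degree_modByMonic_lt p hq)
    · exact (degree_smul_le _ _).trans_lt (degree_modByMonic_lt p hzq)

end Polynomial

section ProdXSubC

variable {R : Type*} [CommRing R]

noncomputable def prodXSubC (n : ℕ) (y : ℕ → R) : R[X] :=
  ∏ i ∈ range n, (X - C (y (i + 1)))

theorem monic_prodXSubC (n : ℕ) (y : ℕ → R) : (prodXSubC n y).Monic :=
  monic_prod_of_monic _ _ fun _ _ => monic_X_sub_C _

theorem natDegree_prodXSubC [Nontrivial R] (n : ℕ) (y : ℕ → R) :
    (prodXSubC n y).natDegree = n := by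
  rw [prodXSubC, natDegree_prod_of_monic _ _ fun _ _ => monic_X_sub_C _]
  simp

theorem degree_prodXSubC [Nontrivial R] (n : ℕ) (y : ℕ → R) : (prodXSubC n y).degree = n := by
  rw [degree_eq_natDegree (monic_prodXSubC n y).ne_zero, natDegree_prodXSubC]

@[simp]
theorem prodXSubC_zero (y : ℕ → R) : prodXSubC 0 y = 1 :=
  prod_range_zero _

theorem prodXSubC_succ (n : ℕ) (y : ℕ → R) :
    prodXSubC (n + 1) y = (X - C (y 1)) * prodXSubC n (fun k => y (k + 1)) := by
  rw [prodXSubC, prod_range_succ', mul_comm]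
  rfl

theorem coeff_zero_prodXSubC (n : ℕ) (y : ℕ → R) :
    (prodXSubC n y).coeff 0 = (-1) ^ n * ∏ i ∈ range n, y (i + 1) := by
  simp [prodXSubC, coeff_zero_prod, prod_neg]

theorem prod_Icc_X_sub_C (n : ℕ) (y : ℕ → R) :
    ∏ i ∈ Icc 1 n, (X - C (y i)) = prodXSubC n y := by
  rw [prodXSubC, ← Ico_add_one_right_eq_Icc, prod_Ico_eq_prod_range]
  simp [add_comm]

end ProdXSubC

section MonotoneMaps

def monotoneMaps (n m : ℕ) : Finset (Fin n → Fin m) :=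
  univ.filter fun τ => ∀ i j, i ≤ j → τ i ≤ τ j

@[simp]
theorem mem_monotoneMaps {n m : ℕ} {τ : Fin n → Fin m} : τ ∈ monotoneMaps n m ↔ Monotone τ := by
  simp [monotoneMaps, Monotone]

theorem Fin.monotone_cons_iff {α : Type*} [Preorder α] {n : ℕ} {a : α} {f : Fin n → α} :
    Monotone (Fin.cons a f : Fin (n + 1) → α) ↔ (∀ i, a ≤ f i) ∧ Monotone f := by
  simp only [monotone_iff_forall_lt]
  exact Fin.liftFun_cons (· ≤ ·)

variable {M : Type*} [AddCommMonoid M]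

theorem sum_monotoneMaps_succ_succ (n m : ℕ) (f : (Fin (n + 1) → Fin (m + 1)) → M) :
    ∑ τ ∈ monotoneMaps (n + 1) (m + 1), f τ =
      ∑ σ ∈ monotoneMaps n (m + 1), f (Fin.cons 0 σ) +
        ∑ σ ∈ monotoneMaps (n + 1) m, f (Fin.succ ∘ σ) := by
  rw [← sum_filter_add_sum_filter_not _ (fun τ => τ 0 = 0)]
  congr 1
  · symm
    refine sum_nbij' (fun σ => Fin.cons 0 σ) Fin.tail ?_ ?_ ?_ ?_ fun _ _ => rfl
    · intro σ hσ
      simpa [Fin.monotone_cons_iff] using hσ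
    · intro τ hτ
      simp only [mem_filter, mem_monotoneMaps] at hτ
      exact mem_monotoneMaps.2 (hτ.1.comp Fin.strictMono_succ.monotone)
    · intro σ _
      exact Fin.tail_cons _ _
    · intro τ hτ
      simp only [mem_filter, mem_monotoneMaps] at hτ
      rw [← hτ.2]
      exact Fin.cons_self_tail τ
  · symm
    have hne : ∀ τ ∈ (monotoneMaps (n + 1) (m + 1)).filter (fun τ => ¬τ 0 = 0), ∀ k, τ k ≠ 0 := by
      intro τ hτ k
      simp only [mem_filter, mem_monotoneMaps] at hτ
      exact (Fin.pos_iff_ne_zero.2 hτ.2 |>.trans_le (hτ.1 (Fin.zero_le k))).ne'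
    refine sum_bij' (fun σ _ => Fin.succ ∘ σ) (fun τ hτ k => (τ k).pred (hne τ hτ k))
      ?_ ?_ ?_ ?_ fun _ _ => rfl
    · intro σ hσ
      simp only [mem_monotoneMaps, mem_filter] at hσ ⊢
      exact ⟨Fin.strictMono_succ.monotone.comp hσ, Fin.succ_ne_zero _⟩
    · intro τ hτ
      simp only [mem_filter, mem_monotoneMaps] at hτ ⊢
      intro i j hij
      simpa using hτ.1 hij
    · intro σ _
      ext k
      simp
    · intro τ _
      ext k
      simp

theorem sum_monotoneMaps_castSucc (n m : ℕ) (f : (Fin n → Fin (m + 1)) → M)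
    (hf : ∀ τ i, τ i = Fin.last m → f τ = 0) :
    ∑ τ ∈ monotoneMaps n (m + 1), f τ = ∑ σ ∈ monotoneMaps n m, f (Fin.castSucc ∘ σ) := by
  have hinj : Set.InjOn (fun σ : Fin n → Fin m => Fin.castSucc ∘ σ) (monotoneMaps n m) :=
    fun σ _ τ _ h => funext fun k => Fin.castSucc_injective m (congrFun h k)
  rw [← sum_image hinj]
  symm
  refine sum_subset ?_ fun τ hτ hτ' => ?_
  · intro τ
    simp only [mem_image, mem_monotoneMaps]
    rintro ⟨σ, hσ, rfl⟩
    exact Fin.strictMono_castSucc.monotone.comp hσ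
  · by_contra hfτ
    have hlast : ∀ k, τ k ≠ Fin.last m := fun k hk => hfτ (hf τ k hk)
    refine hτ' (mem_image.2 ⟨fun k => (τ k).castPred (hlast k), ?_, ?_⟩)
    · refine mem_monotoneMaps.2 fun i j hij => ?_
      simpa using (mem_monotoneMaps.1 hτ) hij
    · ext k
      simp

end MonotoneMaps

section SeqSum

variable {R : Type*} [CommRing R]

/-- Indices are shifted down by one: `τ i + 1` is the paper's `τ_{i+1}`, so the factor is
`y_{τ_{i+1} + i} - z_{τ_{i+1}}`. -/
def seqSum (A C : ℕ) (y z : ℕ → R) : R :=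
  ∑ τ ∈ monotoneMaps C A, ∏ i, (y (τ i + 1 + i) - z (τ i + 1))

theorem seqSum_zero_right (A : ℕ) (y z : ℕ → R) : seqSum A 0 y z = 1 := by
  simp [seqSum, monotoneMaps]

theorem seqSum_self {A : ℕ} {y z : ℕ → R} (hy : ∀ i, A < i → y i = 0)
    (hz : ∀ i, 0 < i → z i = 0) : seqSum A A y z = ∏ i ∈ range A, y (i + 1) := by
  cases A with
  | zero => simp [seqSum_zero_right]
  | succ A =>
    rw [seqSum, sum_eq_single_of_mem 0 (mem_monotoneMaps.2 monotone_const)]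
    · rw [← Fin.prod_univ_eq_prod_range]
      simp [hz 1 one_pos, add_comm]
    · intro τ hτ hτ0
      have hlast : τ (Fin.last A) ≠ 0 := fun h => hτ0 <| funext fun k =>
        le_antisymm (h ▸ mem_monotoneMaps.1 hτ (Fin.le_last k) : τ k ≤ 0) (Fin.zero_le _)
      have hpos : 0 < (τ (Fin.last A) : ℕ) := Nat.pos_of_ne_zero (Fin.val_ne_zero_iff.2 hlast)
      refine prod_eq_zero (mem_univ (Fin.last A)) ?_
      rw [hy _ (by simp; omega), hz _ (by omega), sub_zero]

theorem seqSum_succ_succ (A C : ℕ) {y z : ℕ → R} (hy : ∀ i, A + 1 < i → y i = 0)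
    (hz : z (A + 1) = 0) :
    seqSum (A + 1) (C + 1) y z =
      seqSum A (C + 1) (fun k => y (k + 1)) (fun k => z (k + 1)) +
        (y 1 - z 1) * seqSum A C (fun k => y (k + 1)) z := by
  rw [seqSum, sum_monotoneMaps_succ_succ, add_comm]
  congr 1
  · refine sum_congr rfl fun σ _ => prod_congr rfl fun i _ => ?_
    simp only [Function.comp_apply, Fin.val_succ, add_right_comm]
  · rw [sum_monotoneMaps_castSucc, seqSum, mul_sum]
    · refine sum_congr rfl fun σ _ => ?_
      simp [Fin.prod_univ_succ, add_assoc]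
    · intro τ i hi
      refine prod_eq_zero (mem_univ i.succ) ?_
      simp [hi, hz, hy _ (show A + 1 < A + 1 + (i + 1) by omega)]

end SeqSum

theorem coeff_zero_prodXSubC_divByMonic {R : Type*} [CommRing R] {A B : ℕ} (hBA : B ≤ A)
    {y z : ℕ → R} (hy : ∀ i, A < i → y i = 0) (hz : ∀ i, B < i → z i = 0) :
    (prodXSubC A y /ₘ prodXSubC B z).coeff 0 = (-1) ^ (A - B) * seqSum A (A - B) y z := by
  nontriviality R
  induction A generalizing B y z with
  | zero =>
    obtain rfl : B = 0 := by omega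
    simp [seqSum_zero_right]
  | succ A ih =>
    rcases B with _ | B
    · rw [prodXSubC_zero, divByMonic_one, coeff_zero_prodXSubC, Nat.sub_zero,
        seqSum_self hy hz]
    rcases (Nat.le_of_succ_le_succ hBA).eq_or_lt with rfl | hBA
    · rw [(monic_prodXSubC _ y).divByMonic_eq_one (monic_prodXSubC _ z)
        (by rw [natDegree_prodXSubC, natDegree_prodXSubC]), Nat.sub_self, seqSum_zero_right]
      simp
    have hy' : ∀ i, A < i → y (i + 1) = 0 := fun i hi => hy _ (by omega)
    rw [prodXSubC_succ A y, prodXSubC_succ B z,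
      X_sub_C_mul_divByMonic_X_sub_C_mul _ _ _ (monic_prodXSubC _ _), ← prodXSubC_succ B z,
      coeff_add, coeff_smul, smul_eq_mul, ih hBA.le hy' fun i hi => hz _ (by omega), ih hBA hy' hz]
    obtain ⟨c, hc⟩ : ∃ c, A - B = c + 1 := ⟨A - B - 1, by omega⟩
    rw [Nat.add_sub_add_right, hc, show A - (B + 1) = c by omega,
      seqSum_succ_succ A c hy (hz _ (by omega))]
    ring

theorem stmt_9_general (A B : ℕ) (hAB : B ≤ A) (a b : ℝ) (hb : b ≠ 0)
    (y z : ℕ → ℝ) (hy : ∀ i : ℕ, A < i → y i = 0) (hz : ∀ i : ℕ, B < i → z i = 0)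
    (Q Rem : Polynomial ℝ)
    (hdiv : Polynomial.C a * ∏ i ∈ Finset.Icc 1 A, (X - Polynomial.C (y i))
      = (Polynomial.C b * ∏ i ∈ Finset.Icc 1 B, (X - Polynomial.C (z i))) * Q + Rem)
    (hRem : Rem.degree < (B : WithBot ℕ)) :
    Q.coeff 0 = (a / b) * (-1 : ℝ) ^ (A - B) *
      ∑ τ ∈ Finset.univ.filter
        (fun τ : Fin (A - B) → Fin A => ∀ i j : Fin (A - B), i ≤ j → τ i ≤ τ j),
        ∏ i : Fin (A - B), (y ((τ i : ℕ) + 1 + (i : ℕ)) - z ((τ i : ℕ) + 1)) := by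
  rw [prod_Icc_X_sub_C, prod_Icc_X_sub_C, ← smul_eq_C_mul, ← smul_eq_C_mul, smul_mul_assoc]
    at hdiv
  have hquot : a • prodXSubC A y /ₘ prodXSubC B z = b • Q :=
    (div_modByMonic_unique _ Rem (monic_prodXSubC B z)
      ⟨by rw [hdiv, mul_smul_comm, add_comm], by rwa [degree_prodXSubC]⟩).1
  have hcoeff := congrArg (coeff · 0) hquot
  simp only [smul_divByMonic _ _ (monic_prodXSubC B z), coeff_smul, smul_eq_mul,
    coeff_zero_prodXSubC_divByMonic hAB hy hz] at hcoeff
  change _ = _ * seqSum A (A - B) y z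
  field_simp
  linear_combination -hcoeff

/-- Goulden–Greene type representation of the constant coefficient of the quotient `Q` in the
division of `P = a ∏_{i=1}^A (X−y_i)` by `D = b ∏_{i=1}^B (X−z_i)`:
`Q.coeff 0 = (a/b)(−1)^C ∑_{1 ≤ τ_1 ≤ ⋯ ≤ τ_C ≤ A} ∏_{i=1}^C (y_{τ_i+i−1} − z_{τ_i})`,
with `C = A − B` and the conventions `y_i = 0` for `i > A`, `z_i = 0` for `i > B`. -/
theorem stmt_9 (A B : ℕ) (hB : 1 ≤ B) (hAB : B ≤ A) (a b : ℝ) (ha : a ≠ 0) (hb : b ≠ 0)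
    (y z : ℕ → ℝ) (hy : ∀ i : ℕ, A < i → y i = 0) (hz : ∀ i : ℕ, B < i → z i = 0)
    (Q Rem : Polynomial ℝ)
    (hdiv : Polynomial.C a * ∏ i ∈ Finset.Icc 1 A, (X - Polynomial.C (y i))
      = (Polynomial.C b * ∏ i ∈ Finset.Icc 1 B, (X - Polynomial.C (z i))) * Q + Rem)
    (hRem : Rem.degree < (B : WithBot ℕ)) :
    Q.coeff 0 = (a / b) * (-1 : ℝ) ^ (A - B) *
      ∑ τ ∈ Finset.univ.filter
        (fun τ : Fin (A - B) → Fin A => ∀ i j : Fin (A - B), i ≤ j → τ i ≤ τ j),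
        ∏ i : Fin (A - B), (y ((τ i : ℕ) + 1 + (i : ℕ)) - z ((τ i : ℕ) + 1)) :=
  stmt_9_general A B hAB a b hb y z hy hz Q Rem hdiv hRem
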